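/- arXiv:2204.00230 — 3 statements merged into one kernel-verified Lean document; each statement's English description precedes it below -/
import Mathlib

section
/- With the Taylor-substitution setup: let T > 0, let f ∈ ℝ[X, Y_1, …, Y_t], let trans_1, …, trans_t : ℝ → ℝ be regularly expandable on (0,T] with thresholds n_1, …, n_t, set n* = max(n_1, …, n_t), and let F(x) = f(x, trans_1(x), …, trans_t(x)). Then there exist a real constant M > 0 and a natural number N, both independent of n, such that for all n ≥ n*, the sum of the absolute values of the coefficients of the univariate polynomial Tmin(n,F) is at most M · n^N. -/
/-- `taylorPoly a m n` is the polynomial `Σ_{i=1}^{n} (-1)^{i-1} aᵢ X^{mᵢ}`,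
the sum of the first `n` terms of the alternating series with coefficients `a`
and exponents `m` (indexed from `1`). -/
noncomputable def taylorPoly (a : ℕ → ℝ) (m : ℕ → ℕ) (n : ℕ) : Polynomial ℝ :=
  ∑ i ∈ Finset.range n, Polynomial.C ((-1 : ℝ) ^ i * a (i + 1)) * Polynomial.X ^ (m (i + 1))

/-- `g : ℝ → ℝ` is regularly expandable on `(0, T]` with threshold `n0`, witnessed by
coefficients `a i ∈ (0,1]` and strictly increasing exponents `m` (indexed from `1`):
the alternating series `Σ (-1)^{i-1} aᵢ x^{mᵢ}` converges to `g x` on `[0,T]`,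
`g > 0` on `(0,T]`, and for `n ≥ n0` and `x ∈ (0,T]` the partial sum `taylor(g,n)(x)`
is positive and `aₙ x^{mₙ} > a_{n+1} x^{m_{n+1}} > 0`. -/
structure RegExpand (g : ℝ → ℝ) (T : ℝ) (n0 : ℕ) where
  a : ℕ → ℝ
  m : ℕ → ℕ
  a_pos : ∀ i, 1 ≤ i → 0 < a i
  a_le_one : ∀ i, 1 ≤ i → a i ≤ 1
  m_mono : ∀ i, 1 ≤ i → m i < m (i + 1)
  converges : ∀ x ∈ Set.Icc (0 : ℝ) T,
    Filter.Tendsto (fun N => (taylorPoly a m N).eval x) Filter.atTop (nhds (g x))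
  g_pos : ∀ x ∈ Set.Ioc (0 : ℝ) T, 0 < g x
  taylor_pos : ∀ n, n0 ≤ n → ∀ x ∈ Set.Ioc (0 : ℝ) T, 0 < (taylorPoly a m n).eval x
  terms_dec : ∀ n, n0 ≤ n → ∀ x ∈ Set.Ioc (0 : ℝ) T,
    a (n + 1) * x ^ m (n + 1) < a n * x ^ m n ∧ 0 < a (n + 1) * x ^ m (n + 1)

/-- `Tmin fplus fminus a m n` is the lower limit polynomial
`Tmin(n,F) = f⁺(X, taylor(trans₁,2n), …) + f⁻(X, taylor(trans₁,2n-1), …)`. -/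
noncomputable def Tmin {t : ℕ} (fplus fminus : MvPolynomial (Option (Fin t)) ℝ)
    (a : Fin t → ℕ → ℝ) (m : Fin t → ℕ → ℕ) (n : ℕ) : Polynomial ℝ :=
  MvPolynomial.aeval
      (fun o => Option.elim o Polynomial.X (fun k => taylorPoly (a k) (m k) (2 * n))) fplus +
    MvPolynomial.aeval
      (fun o => Option.elim o Polynomial.X (fun k => taylorPoly (a k) (m k) (2 * n - 1))) fminus

/-- `Tmax fplus fminus a m n` is the upper limit polynomial
`Tmax(n,F) = f⁺(X, taylor(trans₁,2n-1), …) + f⁻(X, taylor(trans₁,2n), …)`. -/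
noncomputable def Tmax {t : ℕ} (fplus fminus : MvPolynomial (Option (Fin t)) ℝ)
    (a : Fin t → ℕ → ℝ) (m : Fin t → ℕ → ℕ) (n : ℕ) : Polynomial ℝ :=
  MvPolynomial.aeval
      (fun o => Option.elim o Polynomial.X (fun k => taylorPoly (a k) (m k) (2 * n - 1))) fplus +
    MvPolynomial.aeval
      (fun o => Option.elim o Polynomial.X (fun k => taylorPoly (a k) (m k) (2 * n))) fminus


/-- Auxiliary ℓ¹-type norm: sum of absolute values of coefficients. -/
noncomputable def nu (p : Polynomial ℝ) : ℝ := ∑ k ∈ p.support, |p.coeff k|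

lemma nu_nonneg (p : Polynomial ℝ) : 0 ≤ nu p :=
  Finset.sum_nonneg fun _ _ => abs_nonneg _

lemma nu_eq_sum_subset {p : Polynomial ℝ} {s : Finset ℕ} (h : p.support ⊆ s) :
    nu p = ∑ k ∈ s, |p.coeff k| := by
  refine Finset.sum_subset h fun k _ hk => ?_
  simp [Polynomial.notMem_support_iff.mp hk]

lemma nu_zero : nu (0 : Polynomial ℝ) = 0 := by simp [nu]

lemma nu_monomial (e : ℕ) (c : ℝ) : nu (Polynomial.monomial e c) = |c| := by
  rcases eq_or_ne c 0 with rfl | hc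
  · simp [nu]
  · rw [nu_eq_sum_subset (s := {e}) (Polynomial.support_monomial' e c)]
    simp [Polynomial.coeff_monomial]

lemma nu_C (c : ℝ) : nu (Polynomial.C c) = |c| := by
  simpa [Polynomial.monomial_zero_left] using nu_monomial 0 c

lemma nu_X : nu (Polynomial.X : Polynomial ℝ) = 1 := by
  rw [← Polynomial.monomial_one_one_eq_X, nu_monomial, abs_one]

lemma nu_add_le (p q : Polynomial ℝ) : nu (p + q) ≤ nu p + nu q := by
  rw [nu_eq_sum_subset (s := p.support ∪ q.support)
      (by simpa using Polynomial.support_add),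
    nu_eq_sum_subset (s := p.support ∪ q.support) Finset.subset_union_left,
    nu_eq_sum_subset (s := p.support ∪ q.support) (p := q) Finset.subset_union_right,
    ← Finset.sum_add_distrib]
  exact Finset.sum_le_sum fun k _ => by simpa using abs_add_le _ _

lemma nu_sum_le {ι : Type*} (s : Finset ι) (p : ι → Polynomial ℝ) :
    nu (∑ i ∈ s, p i) ≤ ∑ i ∈ s, nu (p i) := by
  classical
  induction s using Finset.induction_on with
  | empty => simp [nu_zero]
  | insert _ _ h ih =>
    rw [Finset.sum_insert h, Finset.sum_insert h]
    exact (nu_add_le _ _).trans (by linarith)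

lemma nu_mul_le (p q : Polynomial ℝ) : nu (p * q) ≤ nu p * nu q := by
  classical
  conv_lhs => rw [p.as_sum_support, q.as_sum_support, Finset.sum_mul_sum]
  refine (nu_sum_le _ _).trans ?_
  rw [nu, nu, Finset.sum_mul_sum]
  refine Finset.sum_le_sum fun i _ => ?_
  refine (nu_sum_le _ _).trans (Finset.sum_le_sum fun j _ => ?_)
  rw [Polynomial.monomial_mul_monomial, nu_monomial, abs_mul]

lemma nu_pow_le (p : Polynomial ℝ) (n : ℕ) : nu (p ^ n) ≤ nu p ^ n := by
  induction n with
  | zero => simp [pow_zero, nu_monomial 0 (1 : ℝ), ← Polynomial.C_1,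
      ← Polynomial.monomial_zero_left]
  | succ n ih =>
    rw [pow_succ, pow_succ]
    exact (nu_mul_le _ _).trans (mul_le_mul_of_nonneg_right ih (nu_nonneg _))

lemma nu_prod_le {ι : Type*} (s : Finset ι) (p : ι → Polynomial ℝ) :
    nu (∏ i ∈ s, p i) ≤ ∏ i ∈ s, nu (p i) := by
  classical
  induction s using Finset.induction_on with
  | empty =>
    simp only [Finset.prod_empty]
    rw [← Polynomial.C_1, nu_C, abs_one]
  | @insert a s h ih =>
    rw [Finset.prod_insert h, Finset.prod_insert h]
    refine (nu_mul_le _ _).trans ?_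
    exact mul_le_mul_of_nonneg_left ih (nu_nonneg _)

lemma nu_aeval_le {σ : Type*} (g : MvPolynomial σ ℝ) (φ : σ → Polynomial ℝ)
    (c : ℝ) (hc : 1 ≤ c) (hφ : ∀ s, nu (φ s) ≤ c) :
    nu (MvPolynomial.aeval φ g) ≤ (∑ mo ∈ g.support, |g.coeff mo|) * c ^ g.totalDegree := by
  classical
  rw [MvPolynomial.aeval_def, MvPolynomial.eval₂_eq]
  refine (nu_sum_le _ _).trans ?_
  rw [Finset.sum_mul]
  refine Finset.sum_le_sum fun d hd => ?_
  have h1 : nu ((algebraMap ℝ (Polynomial ℝ)) (g.coeff d) * ∏ i ∈ d.support, φ i ^ d i)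
      ≤ |g.coeff d| * nu (∏ i ∈ d.support, φ i ^ d i) := by
    have := nu_mul_le ((algebraMap ℝ (Polynomial ℝ)) (g.coeff d)) (∏ i ∈ d.support, φ i ^ d i)
    simpa [Polynomial.algebraMap_eq, nu_C] using this
  refine h1.trans ?_
  refine mul_le_mul_of_nonneg_left ?_ (abs_nonneg _)
  have h2 : nu (∏ i ∈ d.support, φ i ^ d i) ≤ ∏ i ∈ d.support, c ^ d i := by
    refine (nu_prod_le _ _).trans (Finset.prod_le_prod (fun i _ => nu_nonneg _) ?_)
    intro i _
    exact (nu_pow_le _ _).trans (pow_le_pow_left₀ (nu_nonneg _) (hφ i) _)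
  refine h2.trans ?_
  rw [Finset.prod_pow_eq_pow_sum]
  exact pow_le_pow_right₀ hc (MvPolynomial.le_totalDegree hd)

lemma nu_taylorPoly_le (a : ℕ → ℝ) (m : ℕ → ℕ) (n : ℕ)
    (ha : ∀ i, 1 ≤ i → |a i| ≤ 1) :
    nu (taylorPoly a m n) ≤ n := by
  rw [taylorPoly]
  refine (nu_sum_le _ _).trans ?_
  have h : ∀ i ∈ Finset.range n,
      nu (Polynomial.C ((-1 : ℝ) ^ i * a (i + 1)) * Polynomial.X ^ (m (i + 1))) ≤ 1 := by
    intro i _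
    rw [Polynomial.C_mul_X_pow_eq_monomial, nu_monomial, abs_mul, abs_pow, abs_neg, abs_one,
      one_pow, one_mul]
    exact ha (i + 1) (Nat.le_add_left 1 i)
  calc ∑ i ∈ Finset.range n, nu _ ≤ ∑ _i ∈ Finset.range n, (1 : ℝ) := Finset.sum_le_sum h
    _ = n := by simp


/-- with the Taylor-substitution setup, there exist `M > 0` and `N : ℕ`,
independent of `n`, such that for all `n ≥ n* = max(n₁,…,n_t)` the sum of the absolute
values of the coefficients of `Tmin(n,F)` is at most `M · n^N`. -/
theorem stmt_17 (T : ℝ) (hT : 0 < T) (t : ℕ)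
    (f fplus fminus : MvPolynomial (Option (Fin t)) ℝ)
    (hplus : ∀ mo : Option (Fin t) →₀ ℕ,
      MvPolynomial.coeff mo fplus =
        if 0 < MvPolynomial.coeff mo f then MvPolynomial.coeff mo f else 0)
    (hminus : ∀ mo : Option (Fin t) →₀ ℕ,
      MvPolynomial.coeff mo fminus =
        if MvPolynomial.coeff mo f < 0 then MvPolynomial.coeff mo f else 0)
    (trans : Fin t → ℝ → ℝ) (nth : Fin t → ℕ)
    (E : ∀ k, RegExpand (trans k) T (nth k))
    (F : ℝ → ℝ)
    (hF : ∀ x : ℝ, F x =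
      MvPolynomial.eval (fun o => Option.elim o x (fun k => trans k x)) f) :
    ∃ M : ℝ, 0 < M ∧ ∃ N : ℕ, ∀ n, Finset.univ.sup nth ≤ n →
      (∑ k ∈ (Tmin fplus fminus (fun k => (E k).a) (fun k => (E k).m) n).support,
          |(Tmin fplus fminus (fun k => (E k).a) (fun k => (E k).m) n).coeff k|) ≤
        M * (n : ℝ) ^ N := by
    classical
  set Sp : ℝ := ∑ mo ∈ fplus.support, |fplus.coeff mo| with hSp
  set Sm : ℝ := ∑ mo ∈ fminus.support, |fminus.coeff mo| with hSm
  have hSp0 : 0 ≤ Sp := Finset.sum_nonneg fun _ _ => abs_nonneg _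
  have hSm0 : 0 ≤ Sm := Finset.sum_nonneg fun _ _ => abs_nonneg _
  have ha : ∀ k : Fin t, ∀ i, 1 ≤ i → |(E k).a i| ≤ 1 := by
    intro k i hi
    rw [abs_of_pos ((E k).a_pos i hi)]
    exact (E k).a_le_one i hi
  rcases Nat.eq_zero_or_pos t with ht | ht
  · -- t = 0 : no transcendental variables, constant bound
    refine ⟨Sp + Sm + 1, by linarith, 0, fun n _ => ?_⟩
    have hφ1 : ∀ s : Option (Fin t),
        nu ((fun o => Option.elim o Polynomial.X
          (fun k => taylorPoly ((E k).a) ((E k).m) (2 * n))) s) ≤ 1 := by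
      rintro (_ | k)
      · simpa using nu_X.le
      · exact absurd k.isLt (by omega)
    have hφ2 : ∀ s : Option (Fin t),
        nu ((fun o => Option.elim o Polynomial.X
          (fun k => taylorPoly ((E k).a) ((E k).m) (2 * n - 1))) s) ≤ 1 := by
      rintro (_ | k)
      · simpa using nu_X.le
      · exact absurd k.isLt (by omega)
    have h1 := nu_aeval_le fplus _ 1 le_rfl hφ1
    have h2 := nu_aeval_le fminus _ 1 le_rfl hφ2
    have hadd := nu_add_le
      (MvPolynomial.aeval (fun o => Option.elim o Polynomial.X
        (fun k => taylorPoly ((E k).a) ((E k).m) (2 * n))) fplus)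
      (MvPolynomial.aeval (fun o => Option.elim o Polynomial.X
        (fun k => taylorPoly ((E k).a) ((E k).m) (2 * n - 1))) fminus)
    show nu (Tmin fplus fminus (fun k => (E k).a) (fun k => (E k).m) n) ≤ _
    rw [Tmin]
    simp only [one_pow, mul_one] at h1 h2
    rw [pow_zero, mul_one]
    linarith
  · -- t ≥ 1 : thresholds force n ≥ 1
    set N : ℕ := max fplus.totalDegree fminus.totalDegree with hN
    refine ⟨(Sp + Sm) * 2 ^ N + 1, by positivity, N, fun n hn => ?_⟩
    have hnth : ∀ k : Fin t, 1 ≤ nth k := by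
      intro k
      by_contra h
      have h0 : nth k = 0 := by omega
      have := (E k).taylor_pos 0 (by omega) T ⟨hT, le_rfl⟩
      rw [taylorPoly] at this
      simp at this
    have hn1 : 1 ≤ n := by
      have k0 : Fin t := ⟨0, ht⟩
      exact le_trans (hnth k0) (le_trans (Finset.le_sup (Finset.mem_univ k0)) hn)
    have hc : (1 : ℝ) ≤ (2 * n : ℕ) := by
      have : (1 : ℕ) ≤ 2 * n := by omega
      exact_mod_cast this
    have hφ1 : ∀ s : Option (Fin t),
        nu ((fun o => Option.elim o Polynomial.X
          (fun k => taylorPoly ((E k).a) ((E k).m) (2 * n))) s) ≤ ((2 * n : ℕ) : ℝ) := by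
      rintro (_ | k)
      · simpa using nu_X.le.trans hc
      · exact nu_taylorPoly_le _ _ _ (ha k)
    have hφ2 : ∀ s : Option (Fin t),
        nu ((fun o => Option.elim o Polynomial.X
          (fun k => taylorPoly ((E k).a) ((E k).m) (2 * n - 1))) s) ≤ ((2 * n : ℕ) : ℝ) := by
      rintro (_ | k)
      · simpa using nu_X.le.trans hc
      · refine (nu_taylorPoly_le _ _ _ (ha k)).trans ?_
        exact_mod_cast Nat.sub_le (2 * n) 1
    have h1 := nu_aeval_le fplus _ _ hc hφ1
    have h2 := nu_aeval_le fminus _ _ hc hφ2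
    have hpow1 : ((2 * n : ℕ) : ℝ) ^ fplus.totalDegree ≤ ((2 * n : ℕ) : ℝ) ^ N :=
      pow_le_pow_right₀ hc (le_max_left _ _)
    have hpow2 : ((2 * n : ℕ) : ℝ) ^ fminus.totalDegree ≤ ((2 * n : ℕ) : ℝ) ^ N :=
      pow_le_pow_right₀ hc (le_max_right _ _)
    have hadd := nu_add_le
      (MvPolynomial.aeval (fun o => Option.elim o Polynomial.X
        (fun k => taylorPoly ((E k).a) ((E k).m) (2 * n))) fplus)
      (MvPolynomial.aeval (fun o => Option.elim o Polynomial.X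
        (fun k => taylorPoly ((E k).a) ((E k).m) (2 * n - 1))) fminus)
    show nu (Tmin fplus fminus (fun k => (E k).a) (fun k => (E k).m) n) ≤ _
    rw [Tmin]
    have key : nu (MvPolynomial.aeval (fun o => Option.elim o Polynomial.X
          (fun k => taylorPoly ((E k).a) ((E k).m) (2 * n))) fplus +
        MvPolynomial.aeval (fun o => Option.elim o Polynomial.X
          (fun k => taylorPoly ((E k).a) ((E k).m) (2 * n - 1))) fminus)
        ≤ (Sp + Sm) * ((2 * n : ℕ) : ℝ) ^ N := by
      have b1 : Sp * ((2 * n : ℕ) : ℝ) ^ fplus.totalDegree ≤ Sp * ((2 * n : ℕ) : ℝ) ^ N :=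
        mul_le_mul_of_nonneg_left hpow1 hSp0
      have b2 : Sm * ((2 * n : ℕ) : ℝ) ^ fminus.totalDegree ≤ Sm * ((2 * n : ℕ) : ℝ) ^ N :=
        mul_le_mul_of_nonneg_left hpow2 hSm0
      have := hadd.trans (add_le_add (h1.trans b1) (h2.trans b2))
      linarith [this]
    refine key.trans ?_
    have hcast : ((2 * n : ℕ) : ℝ) ^ N = 2 ^ N * (n : ℝ) ^ N := by
      push_cast
      rw [mul_pow]
    rw [hcast]
    have hnN : (0 : ℝ) ≤ (n : ℝ) ^ N := by positivity
    nlinarith [hnN]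
end

section
/- With the Taylor-substitution setup: let T > 0, let f ∈ ℝ[X, Y_1, …, Y_t], let trans_1, …, trans_t : ℝ → ℝ be regularly expandable on (0,T] with thresholds n_1, …, n_t, set n* = max(n_1, …, n_t), and let F(x) = f(x, trans_1(x), …, trans_t(x)). Suppose F(x) > 0 for all x ∈ (0,T). Then there exists n_0 ≥ n* such that Tmin(n_0,F) is a nonzero polynomial whose trailing degree (the least k such that the coefficient of X^k in Tmin(n_0,F) is nonzero) is strictly less than 2·n_0 − 1. -/
open Polynomial Finset


namespace Stmt18Aux

noncomputable def l1 (p : ℝ[X]) : ℝ := ∑ i ∈ p.support, |p.coeff i|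

lemma l1_nonneg (p : ℝ[X]) : 0 ≤ l1 p :=
  Finset.sum_nonneg fun _ _ => abs_nonneg _

lemma l1_eq {p : ℝ[X]} {N : ℕ} (h : p.natDegree < N) :
    l1 p = ∑ i ∈ range N, |p.coeff i| :=
  Finset.sum_subset (supp_subset_range h) (fun i _ hi => by
    simp [Polynomial.notMem_support_iff.mp hi])

lemma l1_zero : l1 (0 : ℝ[X]) = 0 := by simp [l1]

lemma l1_add_le (p q : ℝ[X]) : l1 (p + q) ≤ l1 p + l1 q := by
  set N := max (max p.natDegree q.natDegree) (p+q).natDegree + 1 with hN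
  rw [l1_eq (p := p + q) (N := N) (by omega), l1_eq (p := p) (N := N) (by omega),
    l1_eq (p := q) (N := N) (by omega), ← Finset.sum_add_distrib]
  exact Finset.sum_le_sum fun i _ => by rw [Polynomial.coeff_add]; exact abs_add_le _ _

lemma l1_mul_le (p q : ℝ[X]) : l1 (p * q) ≤ l1 p * l1 q := by
  set N := p.natDegree + q.natDegree + 1 with hN
  have hpq : (p * q).natDegree < N := lt_of_le_of_lt natDegree_mul_le (by omega)
  rw [l1_eq hpq, l1_eq (p := p) (N := N) (by omega), l1_eq (p := q) (N := N) (by omega)]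
  have step1 : ∑ n ∈ range N, |(p * q).coeff n| ≤
      ∑ n ∈ range N, ∑ ij ∈ Finset.HasAntidiagonal.antidiagonal n, |p.coeff ij.1| * |q.coeff ij.2| := by
    refine Finset.sum_le_sum fun n _ => ?_
    rw [Polynomial.coeff_mul]
    refine le_trans (Finset.abs_sum_le_sum_abs _ _) (le_of_eq ?_)
    exact Finset.sum_congr rfl fun ij _ => abs_mul _ _
  refine le_trans step1 ?_
  have hdisj : (↑(range N) : Set ℕ).PairwiseDisjoint (fun n => Finset.HasAntidiagonal.antidiagonal n) := by
    intro i _ j _ hij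
    simp only [Finset.disjoint_left]
    intro ij h1 h2
    rw [Finset.HasAntidiagonal.mem_antidiagonal] at h1 h2
    omega
  rw [← Finset.sum_biUnion hdisj]
  have hsub : (range N).biUnion (fun n => Finset.HasAntidiagonal.antidiagonal n) ⊆ range N ×ˢ range N := by
    intro ij hij
    simp only [Finset.mem_biUnion, Finset.mem_range, Finset.HasAntidiagonal.mem_antidiagonal] at hij
    obtain ⟨n, hn, hijn⟩ := hij
    simp only [Finset.mem_product, Finset.mem_range]
    omega
  refine le_trans (Finset.sum_le_sum_of_subset_of_nonneg hsub
    (fun _ _ _ => mul_nonneg (abs_nonneg _) (abs_nonneg _))) ?_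
  rw [Finset.sum_mul_sum, Finset.sum_product]

lemma l1_C (c : ℝ) : l1 (Polynomial.C c) = |c| := by
  rw [l1_eq (p := Polynomial.C c) (N := 1) (by simp)]
  simp

lemma l1_one : l1 (1 : ℝ[X]) = 1 := by
  simpa using l1_C 1

lemma l1_X : l1 (Polynomial.X : ℝ[X]) = 1 := by
  rw [l1_eq (p := (Polynomial.X : ℝ[X])) (N := 2) (by simp)]
  simp [Finset.sum_range_succ]

lemma l1_pow_le (p : ℝ[X]) (k : ℕ) : l1 (p ^ k) ≤ l1 p ^ k := by
  induction k with
  | zero => simp [l1_one]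
  | succ k ih =>
    rw [pow_succ, pow_succ]
    exact le_trans (l1_mul_le _ _) (mul_le_mul_of_nonneg_right ih (l1_nonneg p) |>.trans
      (le_refl _))

lemma l1_sum_le {ι : Type*} (s : Finset ι) (f : ι → ℝ[X]) :
    l1 (∑ i ∈ s, f i) ≤ ∑ i ∈ s, l1 (f i) := by
  induction s using Finset.cons_induction_on with
  | empty => simp [l1_zero]
  | cons _ _ h ih =>
    rw [Finset.sum_cons, Finset.sum_cons]
    exact le_trans (l1_add_le _ _) (by linarith)

lemma l1_prod_le {ι : Type*} (s : Finset ι) (f : ι → ℝ[X]) :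
    l1 (∏ i ∈ s, f i) ≤ ∏ i ∈ s, l1 (f i) := by
  induction s using Finset.cons_induction_on with
  | empty => simp [l1_one]
  | cons _ _ h ih =>
    rw [Finset.prod_cons, Finset.prod_cons]
    exact le_trans (l1_mul_le _ _) (mul_le_mul_of_nonneg_left ih (l1_nonneg _))

lemma l1_eval_le {p : ℝ[X]} {x : ℝ} (hx0 : 0 ≤ x) (hx1 : x ≤ 1) {D : ℕ}
    (hD : ∀ i, i < D → p.coeff i = 0) : |p.eval x| ≤ l1 p * x ^ D := by
  rw [Polynomial.eval_eq_sum_range (p := p) x]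
  refine le_trans (Finset.abs_sum_le_sum_abs _ _) ?_
  rw [l1_eq (p := p) (N := p.natDegree + 1) (by omega), Finset.sum_mul]
  refine Finset.sum_le_sum fun i _ => ?_
  rcases lt_or_ge i D with h | h
  · simp [hD i h]
  · rw [abs_mul, abs_pow, abs_of_nonneg hx0]
    exact mul_le_mul_of_nonneg_left (pow_le_pow_of_le_one hx0 hx1 h) (abs_nonneg _)

lemma l1_taylor (a : ℕ → ℝ) (m : ℕ → ℕ) (ha : ∀ i, 1 ≤ i → 0 < a i)
    (ha1 : ∀ i, 1 ≤ i → a i ≤ 1) (N : ℕ) : l1 (taylorPoly a m N) ≤ N := by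
  refine le_trans (l1_sum_le _ _) ?_
  have : ∀ i ∈ range N, l1 (Polynomial.C ((-1:ℝ)^i * a (i+1)) * Polynomial.X ^ (m (i+1))) ≤ 1 := by
    intro i _
    refine le_trans (l1_mul_le _ _) ?_
    have h1 : l1 (Polynomial.C ((-1:ℝ)^i * a (i+1))) ≤ 1 := by
      rw [l1_C, abs_mul, abs_pow, abs_neg, abs_one, one_pow, one_mul,
        abs_of_pos (ha (i+1) (by omega))]
      exact ha1 (i+1) (by omega)
    have h2 : l1 ((Polynomial.X : ℝ[X]) ^ (m (i+1))) ≤ 1 := by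
      refine le_trans (l1_pow_le _ _) ?_
      rw [l1_X, one_pow]
    calc l1 _ * l1 _ ≤ 1 * 1 := mul_le_mul h1 h2 (l1_nonneg _) zero_le_one
    _ = 1 := by ring
  refine le_trans (Finset.sum_le_sum this) ?_
  simp


open MvPolynomial

lemma eval_mono {σ : Type*} (p : MvPolynomial σ ℝ) (hp : ∀ d, 0 ≤ MvPolynomial.coeff d p)
    (v w : σ → ℝ) (hv : ∀ o, 0 ≤ v o) (hvw : ∀ o, v o ≤ w o) :
    MvPolynomial.eval v p ≤ MvPolynomial.eval w p := by
  rw [MvPolynomial.eval_eq, MvPolynomial.eval_eq]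
  refine Finset.sum_le_sum fun d _ => ?_
  refine mul_le_mul_of_nonneg_left ?_ (hp d)
  refine Finset.prod_le_prod (fun i _ => pow_nonneg (hv i) _) (fun i _ => ?_)
  exact pow_le_pow_left₀ (hv i) (hvw i) _

lemma evalEval {σ : Type*} (x : ℝ) (φ : σ → Polynomial ℝ) (p : MvPolynomial σ ℝ) :
    (MvPolynomial.aeval φ p).eval x = MvPolynomial.eval (fun o => (φ o).eval x) p := by
  induction p using MvPolynomial.induction_on with
  | C a => simp
  | add p q hp hq => simp [hp, hq]
  | mul_X p n hp => simp [hp]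

lemma dvd_aeval_sub {σ : Type*} (d : ℕ) (φ ψ : σ → Polynomial ℝ)
    (h : ∀ o, (Polynomial.X : ℝ[X]) ^ d ∣ (φ o - ψ o)) (p : MvPolynomial σ ℝ) :
    (Polynomial.X : ℝ[X]) ^ d ∣ (MvPolynomial.aeval φ p - MvPolynomial.aeval ψ p) := by
  induction p using MvPolynomial.induction_on with
  | C a => simp
  | add p q hp hq =>
    have : MvPolynomial.aeval φ (p + q) - MvPolynomial.aeval ψ (p + q) =
        (MvPolynomial.aeval φ p - MvPolynomial.aeval ψ p) +
        (MvPolynomial.aeval φ q - MvPolynomial.aeval ψ q) := by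
      simp; ring
    rw [this]; exact dvd_add hp hq
  | mul_X p n hp =>
    have : MvPolynomial.aeval φ (p * MvPolynomial.X n) -
        MvPolynomial.aeval ψ (p * MvPolynomial.X n) =
        MvPolynomial.aeval φ p * (φ n - ψ n) +
        (MvPolynomial.aeval φ p - MvPolynomial.aeval ψ p) * ψ n := by
      simp; ring
    rw [this]
    exact dvd_add (Dvd.dvd.mul_left (h n) _) (hp.mul_right _)

lemma m_ge (m : ℕ → ℕ) (hm : ∀ i, 1 ≤ i → m i < m (i + 1)) : ∀ i, i ≤ m (i + 1) := by
  intro i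
  induction i with
  | zero => omega
  | succ i ih => have := hm (i + 1) (by omega); omega

lemma dvd_taylor_sub (a : ℕ → ℝ) (m : ℕ → ℕ) (hm : ∀ i, 1 ≤ i → m i < m (i + 1))
    {d N N' : ℕ} (hN : d ≤ N) (hNN' : N ≤ N') :
    (Polynomial.X : ℝ[X]) ^ d ∣ (taylorPoly a m N' - taylorPoly a m N) := by
  have hsum : taylorPoly a m N' - taylorPoly a m N =
      ∑ i ∈ Finset.Ico N N', Polynomial.C ((-1 : ℝ) ^ i * a (i + 1)) *
        Polynomial.X ^ (m (i + 1)) := by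
    rw [taylorPoly, taylorPoly, Finset.range_eq_Ico,
      ← Finset.sum_Ico_consecutive _ (Nat.zero_le N) hNN']
    simp only [Finset.range_eq_Ico]
    ring
  rw [hsum]
  refine Finset.dvd_sum fun i hi => ?_
  rw [Finset.mem_Ico] at hi
  refine Dvd.dvd.mul_left ?_ _
  exact pow_dvd_pow _ (le_trans (by omega : d ≤ i) (m_ge m hm i))

lemma coeff_eq_of_X_pow_dvd {p q : ℝ[X]} {d : ℕ}
    (h : (Polynomial.X : ℝ[X]) ^ (d + 1) ∣ (p - q)) : p.coeff d = q.coeff d := by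
  obtain ⟨r, hr⟩ := h
  have : p = q + r * Polynomial.X ^ (d + 1) := by
    rw [mul_comm] at hr
    linear_combination hr
  rw [this, Polynomial.coeff_add, Polynomial.coeff_mul_X_pow']
  simp

lemma taylor_eval_succ (a : ℕ → ℝ) (m : ℕ → ℕ) (N : ℕ) (x : ℝ) :
    (taylorPoly a m (N + 1)).eval x =
      (taylorPoly a m N).eval x + (-1 : ℝ) ^ N * a (N + 1) * x ^ (m (N + 1)) := by
  rw [taylorPoly, taylorPoly, Finset.sum_range_succ]
  simp [mul_assoc]

lemma l1_aeval_le {σ : Type*} (p : MvPolynomial σ ℝ) (φ : σ → Polynomial ℝ) (M : ℝ)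
    (hM : 1 ≤ M) (hφ : ∀ o, l1 (φ o) ≤ M) :
    l1 (MvPolynomial.aeval φ p) ≤
      (∑ d ∈ p.support, |MvPolynomial.coeff d p|) * M ^ p.totalDegree := by
  rw [MvPolynomial.aeval_def, MvPolynomial.eval₂_eq, Finset.sum_mul]
  refine le_trans (l1_sum_le _ _) (Finset.sum_le_sum fun d hd => ?_)
  refine le_trans (l1_mul_le _ _) ?_
  have h0 : (0:ℝ) ≤ M := le_trans zero_le_one hM
  have h1 : l1 ((algebraMap ℝ ℝ[X]) (MvPolynomial.coeff d p)) ≤ |MvPolynomial.coeff d p| := by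
    rw [Polynomial.algebraMap_eq, l1_C]
  have h2 : l1 (∏ i ∈ d.support, φ i ^ d i) ≤ M ^ p.totalDegree := by
    refine le_trans (l1_prod_le _ _) ?_
    have step : ∏ i ∈ d.support, l1 (φ i ^ d i) ≤ ∏ i ∈ d.support, M ^ d i := by
      refine Finset.prod_le_prod (fun i _ => l1_nonneg _) (fun i _ => ?_)
      exact le_trans (l1_pow_le _ _) (pow_le_pow_left₀ (l1_nonneg _) (hφ i) _)
    refine le_trans step ?_
    rw [Finset.prod_pow_eq_pow_sum]
    exact pow_le_pow_right₀ hM (le_trans (le_of_eq rfl) (MvPolynomial.le_totalDegree hd))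
  exact mul_le_mul h1 h2 (l1_nonneg _) (abs_nonneg _)

end Stmt18Aux


namespace Stmt18Aux

lemma sub_tendsto {g : ℝ → ℝ} {T : ℝ} {n0 : ℕ} (E : RegExpand g T n0) {x : ℝ}
    (hx : x ∈ Set.Ioc (0 : ℝ) T) (N : ℕ) :
    Filter.Tendsto (fun k => (taylorPoly E.a E.m (N + 2 * k)).eval x) Filter.atTop
      (nhds (g x)) := by
  refine (E.converges x ⟨le_of_lt hx.1, hx.2⟩).comp ?_
  exact Filter.tendsto_atTop_mono (fun k => by omega : ∀ k, k ≤ N + 2 * k) Filter.tendsto_id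

lemma even_le {g : ℝ → ℝ} {T : ℝ} {n0 : ℕ} (E : RegExpand g T n0) {x : ℝ}
    (hx : x ∈ Set.Ioc (0 : ℝ) T) {N : ℕ} (hN : n0 ≤ N) (hEv : Even N) :
    (taylorPoly E.a E.m N).eval x ≤ g x := by
  refine ge_of_tendsto' (sub_tendsto E hx N) fun k => ?_
  induction k with
  | zero => simp
  | succ k ih =>
    refine le_trans ih ?_
    have hM : Even (N + 2 * k) := by
      obtain ⟨r, hr⟩ := hEv; exact ⟨r + k, by omega⟩
    have h2 : N + 2 * (k + 1) = (N + 2 * k + 1) + 1 := by omega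
    rw [h2, taylor_eval_succ, taylor_eval_succ]
    have e1 : (-1 : ℝ) ^ (N + 2 * k) = 1 := hM.neg_one_pow
    have e2 : (-1 : ℝ) ^ (N + 2 * k + 1) = -1 := by
      rw [pow_succ, e1]; ring
    rw [e1, e2]
    have := (E.terms_dec (N + 2 * k + 1) (by omega) x hx).1
    nlinarith [this]

lemma odd_ge {g : ℝ → ℝ} {T : ℝ} {n0 : ℕ} (E : RegExpand g T n0) {x : ℝ}
    (hx : x ∈ Set.Ioc (0 : ℝ) T) {N : ℕ} (hN : n0 ≤ N) (hOd : Odd N) :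
    g x ≤ (taylorPoly E.a E.m N).eval x := by
  refine le_of_tendsto' (sub_tendsto E hx N) fun k => ?_
  induction k with
  | zero => simp
  | succ k ih =>
    refine le_trans ?_ ih
    have hM : Odd (N + 2 * k) := by
      obtain ⟨r, hr⟩ := hOd; exact ⟨r + k, by omega⟩
    have h2 : N + 2 * (k + 1) = (N + 2 * k + 1) + 1 := by omega
    rw [h2, taylor_eval_succ, taylor_eval_succ]
    have e1 : (-1 : ℝ) ^ (N + 2 * k) = -1 := hM.neg_one_pow
    have e2 : (-1 : ℝ) ^ (N + 2 * k + 1) = 1 := by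
      rw [pow_succ, e1]; ring
    rw [e1, e2]
    have := (E.terms_dec (N + 2 * k + 1) (by omega) x hx).1
    nlinarith [this]

end Stmt18Aux


/-- with the Taylor-substitution setup, if `F > 0` on `(0,T)`, then there
is `n₀ ≥ n* = max(n₁,…,n_t)` such that `Tmin(n₀,F)` is nonzero and its trailing degree
is strictly less than `2·n₀ − 1`. -/
theorem stmt_18 (T : ℝ) (hT : 0 < T) (t : ℕ)
    (f fplus fminus : MvPolynomial (Option (Fin t)) ℝ)
    (hplus : ∀ mo : Option (Fin t) →₀ ℕ,
      MvPolynomial.coeff mo fplus =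
        if 0 < MvPolynomial.coeff mo f then MvPolynomial.coeff mo f else 0)
    (hminus : ∀ mo : Option (Fin t) →₀ ℕ,
      MvPolynomial.coeff mo fminus =
        if MvPolynomial.coeff mo f < 0 then MvPolynomial.coeff mo f else 0)
    (trans : Fin t → ℝ → ℝ) (nth : Fin t → ℕ)
    (E : ∀ k, RegExpand (trans k) T (nth k))
    (F : ℝ → ℝ)
    (hF : ∀ x : ℝ, F x =
      MvPolynomial.eval (fun o => Option.elim o x (fun k => trans k x)) f)
    (hFpos : ∀ x ∈ Set.Ioo (0 : ℝ) T, 0 < F x) :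
    ∃ n0, Finset.univ.sup nth ≤ n0 ∧
      Tmin fplus fminus (fun k => (E k).a) (fun k => (E k).m) n0 ≠ 0 ∧
      (Tmin fplus fminus (fun k => (E k).a) (fun k => (E k).m) n0).natTrailingDegree <
        2 * n0 - 1 := by
  classical
  set Φ : ℕ → Option (Fin t) → Polynomial ℝ :=
    fun N o => Option.elim o Polynomial.X (fun k => taylorPoly ((E k).a) ((E k).m) N) with hΦ
  have hTmin : ∀ n, Tmin fplus fminus (fun k => (E k).a) (fun k => (E k).m) n =
      MvPolynomial.aeval (Φ (2 * n)) fplus + MvPolynomial.aeval (Φ (2 * n - 1)) fminus :=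
    fun n => rfl
  have hTmax : ∀ n, Tmax fplus fminus (fun k => (E k).a) (fun k => (E k).m) n =
      MvPolynomial.aeval (Φ (2 * n - 1)) fplus + MvPolynomial.aeval (Φ (2 * n)) fminus :=
    fun n => rfl
  -- coefficient signs
  have hplusnn : ∀ d, 0 ≤ MvPolynomial.coeff d fplus := by
    intro d; rw [hplus]; split_ifs with h; exacts [le_of_lt h, le_rfl]
  have hminusnp : ∀ d, MvPolynomial.coeff d fminus ≤ 0 := by
    intro d; rw [hminus]; split_ifs with h; exacts [le_of_lt h, le_rfl]
  have hsum : fplus + fminus = f := by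
    ext d
    rw [MvPolynomial.coeff_add, hplus, hminus]
    rcases lt_trichotomy (MvPolynomial.coeff d f) 0 with h | h | h
    · rw [if_neg (by linarith), if_pos h]; ring
    · rw [if_neg (by linarith), if_neg (by linarith)]; simp [h]
    · rw [if_pos h, if_neg (by linarith)]; ring
  -- coefficient stabilization
  have hstab : ∀ (d N N' : ℕ), d + 1 ≤ N → d + 1 ≤ N' →
      ∀ p : MvPolynomial (Option (Fin t)) ℝ,
      (MvPolynomial.aeval (Φ N) p).coeff d = (MvPolynomial.aeval (Φ N') p).coeff d := by
    intro d N N' hN hN' p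
    refine Stmt18Aux.coeff_eq_of_X_pow_dvd (Stmt18Aux.dvd_aeval_sub (d + 1) _ _ (fun o => ?_) p)
    match o with
    | none => simp [hΦ]
    | some k =>
      simp only [hΦ, Option.elim]
      rcases le_total N N' with h | h
      · have := Stmt18Aux.dvd_taylor_sub (E k).a (E k).m (E k).m_mono hN h
        -- X^(d+1) ∣ taylor N' - taylor N ; we need ∣ taylor N - taylor N'
        have h2 : taylorPoly (E k).a (E k).m N - taylorPoly (E k).a (E k).m N' =
            -(taylorPoly (E k).a (E k).m N' - taylorPoly (E k).a (E k).m N) := by ring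
        rw [h2]; exact dvd_neg.mpr this
      · exact Stmt18Aux.dvd_taylor_sub (E k).a (E k).m (E k).m_mono hN' h
  set c : ℕ → ℝ := fun d => (MvPolynomial.aeval (Φ (d + 1)) fplus).coeff d +
      (MvPolynomial.aeval (Φ (d + 1)) fminus).coeff d with hc
  have hTminc : ∀ n d, 1 ≤ n → d + 1 ≤ 2 * n - 1 →
      (Tmin fplus fminus (fun k => (E k).a) (fun k => (E k).m) n).coeff d = c d := by
    intro n d h1 hd
    rw [hTmin, Polynomial.coeff_add, hstab d (2 * n) (d + 1) (by omega) le_rfl fplus,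
      hstab d (2 * n - 1) (d + 1) (by omega) le_rfl fminus]
  have hTmaxc : ∀ n d, 1 ≤ n → d + 1 ≤ 2 * n - 1 →
      (Tmax fplus fminus (fun k => (E k).a) (fun k => (E k).m) n).coeff d = c d := by
    intro n d h1 hd
    rw [hTmax, Polynomial.coeff_add, hstab d (2 * n - 1) (d + 1) (by omega) le_rfl fplus,
      hstab d (2 * n) (d + 1) (by omega) le_rfl fminus]
  by_cases hex : ∃ d, c d ≠ 0
  · obtain ⟨d, hd⟩ := hex
    refine ⟨max (Finset.univ.sup nth) (d + 1), le_max_left _ _, ?_, ?_⟩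
    · intro h0
      have := hTminc (max (Finset.univ.sup nth) (d + 1)) d
        (le_trans (by omega) (le_max_right _ _)) (by have := le_max_right (Finset.univ.sup nth) (d+1); omega)
      rw [h0, Polynomial.coeff_zero] at this
      exact hd this.symm
    · have hco := hTminc (max (Finset.univ.sup nth) (d + 1)) d
        (le_trans (by omega) (le_max_right _ _)) (by have := le_max_right (Finset.univ.sup nth) (d+1); omega)
      have := Polynomial.natTrailingDegree_le_of_ne_zero (by rw [hco]; exact hd)
      have hdm := le_max_right (Finset.univ.sup nth) (d + 1)
      omega
  · push_neg at hex
    exfalso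
    set x : ℝ := min (T / 2) (2⁻¹ : ℝ) with hxdef
    have hx0 : 0 < x := lt_min (by linarith) (by norm_num)
    have hxT : x < T := lt_of_le_of_lt (min_le_left _ _) (by linarith)
    have hxh : x ≤ 2⁻¹ := min_le_right _ _
    have hx1 : x ≤ 1 := by linarith
    have hxIoc : x ∈ Set.Ioc (0 : ℝ) T := ⟨hx0, le_of_lt hxT⟩
    have hFx : 0 < F x := hFpos x ⟨hx0, hxT⟩
    set A : ℝ := (∑ d ∈ fplus.support, |MvPolynomial.coeff d fplus|) +
      (∑ d ∈ fminus.support, |MvPolynomial.coeff d fminus|) with hA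
    set B : ℕ := max fplus.totalDegree fminus.totalDegree with hB
    set nst : ℕ := max (Finset.univ.sup nth) 1 with hnst
    -- step 1: sandwich
    have sandwich : ∀ n, nst ≤ n → F x ≤
        (Tmax fplus fminus (fun k => (E k).a) (fun k => (E k).m) n).eval x := by
      intro n hn
      have hn1 : 1 ≤ n := le_trans (le_max_right _ _) hn
      have hnk : ∀ k : Fin t, nth k ≤ n := fun k =>
        le_trans (le_trans (Finset.le_sup (Finset.mem_univ k)) (le_max_left _ _)) hn
      rw [hTmax, Polynomial.eval_add, Stmt18Aux.evalEval, Stmt18Aux.evalEval]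
      rw [hF, ← hsum, MvPolynomial.eval_add]
      set v : Option (Fin t) → ℝ := fun o => Option.elim o x (fun k => trans k x) with hv
      have hv0 : ∀ o, 0 ≤ v o := by
        intro o; match o with
        | none => exact le_of_lt hx0
        | some k => exact le_of_lt ((E k).g_pos x hxIoc)
      have h1 : MvPolynomial.eval v fplus ≤
          MvPolynomial.eval (fun o => (Φ (2 * n - 1) o).eval x) fplus := by
        refine Stmt18Aux.eval_mono fplus hplusnn v _ hv0 fun o => ?_
        match o with
        | none => simp [hΦ, hv]
        | some k =>
          simp only [hΦ, hv, Option.elim]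
          refine Stmt18Aux.odd_ge (E k) hxIoc (by have := hnk k; omega) ?_
          exact ⟨n - 1, by omega⟩
      have h2 : MvPolynomial.eval v fminus ≤
          MvPolynomial.eval (fun o => (Φ (2 * n) o).eval x) fminus := by
        have key : MvPolynomial.eval (fun o => (Φ (2 * n) o).eval x) (-fminus) ≤
            MvPolynomial.eval v (-fminus) := by
          refine Stmt18Aux.eval_mono (-fminus) (fun d => by
            rw [MvPolynomial.coeff_neg]; linarith [hminusnp d]) _ v (fun o => ?_) (fun o => ?_)
          · match o with
            | none => simp [hΦ]; exact le_of_lt hx0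
            | some k =>
              simp only [hΦ, Option.elim]
              exact le_of_lt ((E k).taylor_pos (2 * n) (by have := hnk k; omega) x hxIoc)
          · match o with
            | none => simp [hΦ, hv]
            | some k =>
              simp only [hΦ, hv, Option.elim]
              exact Stmt18Aux.even_le (E k) hxIoc (by have := hnk k; omega) ⟨n, by omega⟩
        rw [map_neg, map_neg] at key
        linarith
      linarith
    -- step 2: Stmt18Aux.l1 bound
    have bound : ∀ n, nst ≤ n → F x ≤ A * (2 * n : ℝ) ^ B * x ^ (2 * n - 1) := by
      intro n hn
      have hn1 : 1 ≤ n := le_trans (le_max_right _ _) hn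
      have hM1 : (1 : ℝ) ≤ (2 * n : ℝ) := by
        have : (1 : ℝ) ≤ (n : ℝ) := by exact_mod_cast hn1
        linarith
      set P := Tmax fplus fminus (fun k => (E k).a) (fun k => (E k).m) n with hP
      have hvanish : ∀ i, i < 2 * n - 1 → P.coeff i = 0 := by
        intro i hi
        rw [hP, hTmaxc n i hn1 (by omega)]
        exact hex i
      have hφbound : ∀ N, N ≤ 2 * n → ∀ o, Stmt18Aux.l1 (Φ N o) ≤ (2 * n : ℝ) := by
        intro N hN o
        match o with
        | none => rw [hΦ]; simp only [Option.elim]; rw [Stmt18Aux.l1_X]; exact hM1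
        | some k =>
          simp only [hΦ, Option.elim]
          refine le_trans (Stmt18Aux.l1_taylor _ _ (E k).a_pos (E k).a_le_one N) ?_
          exact_mod_cast hN
      have hl1 : Stmt18Aux.l1 P ≤ A * (2 * n : ℝ) ^ B := by
        rw [hP, hTmax]
        refine le_trans (Stmt18Aux.l1_add_le _ _) ?_
        have b1 := Stmt18Aux.l1_aeval_le fplus (Φ (2 * n - 1)) (2 * n : ℝ) hM1
          (hφbound (2 * n - 1) (by omega))
        have b2 := Stmt18Aux.l1_aeval_le fminus (Φ (2 * n)) (2 * n : ℝ) hM1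
          (hφbound (2 * n) le_rfl)
        have hp1 : ((2 * n : ℝ)) ^ fplus.totalDegree ≤ (2 * n : ℝ) ^ B :=
          pow_le_pow_right₀ hM1 (le_max_left _ _)
        have hp2 : ((2 * n : ℝ)) ^ fminus.totalDegree ≤ (2 * n : ℝ) ^ B :=
          pow_le_pow_right₀ hM1 (le_max_right _ _)
        have hs1 : (0:ℝ) ≤ ∑ d ∈ fplus.support, |MvPolynomial.coeff d fplus| :=
          Finset.sum_nonneg fun _ _ => abs_nonneg _
        have hs2 : (0:ℝ) ≤ ∑ d ∈ fminus.support, |MvPolynomial.coeff d fminus| :=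
          Finset.sum_nonneg fun _ _ => abs_nonneg _
        calc Stmt18Aux.l1 (MvPolynomial.aeval (Φ (2*n-1)) fplus) + Stmt18Aux.l1 (MvPolynomial.aeval (Φ (2*n)) fminus)
            ≤ (∑ d ∈ fplus.support, |MvPolynomial.coeff d fplus|) * (2 * n : ℝ) ^ B +
              (∑ d ∈ fminus.support, |MvPolynomial.coeff d fminus|) * (2 * n : ℝ) ^ B := by
              refine add_le_add (le_trans b1 ?_) (le_trans b2 ?_)
              · exact mul_le_mul_of_nonneg_left hp1 hs1
              · exact mul_le_mul_of_nonneg_left hp2 hs2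
          _ = A * (2 * n : ℝ) ^ B := by rw [hA]; ring
      have heval := Stmt18Aux.l1_eval_le (le_of_lt hx0) hx1 hvanish
      have : P.eval x ≤ Stmt18Aux.l1 P * x ^ (2 * n - 1) := le_trans (le_abs_self _) heval
      refine le_trans (sandwich n hn) (le_trans this ?_)
      exact mul_le_mul_of_nonneg_right hl1 (pow_nonneg (le_of_lt hx0) _)
    -- step 3: the bound tends to 0
    have htend : Filter.Tendsto (fun n : ℕ => A * (2 * n : ℝ) ^ B * x ^ (2 * n - 1))
        Filter.atTop (nhds 0) := by
      have hsq : ‖x ^ 2‖ < 1 := by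
        rw [Real.norm_eq_abs, abs_of_pos (by positivity)]
        nlinarith
      have base : Filter.Tendsto (fun n : ℕ => (n : ℝ) ^ B * (x ^ 2) ^ n)
          Filter.atTop (nhds 0) :=
        (summable_pow_mul_geometric_of_norm_lt_one B hsq).tendsto_atTop_zero
      have base2 : Filter.Tendsto (fun n : ℕ => (A * 2 ^ B / x) * ((n : ℝ) ^ B * (x ^ 2) ^ n))
          Filter.atTop (nhds 0) := by
        simpa using base.const_mul (A * 2 ^ B / x)
      refine base2.congr' ?_
      filter_upwards [Filter.eventually_ge_atTop 1] with n hn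
      have hxp : x ^ (2 * n - 1) * x = x ^ (2 * n) := by
        rw [← pow_succ]
        congr 1
        omega
      have hx2 : (x ^ 2) ^ n = x ^ (2 * n) := by rw [← pow_mul]
      field_simp
      rw [hx2, ← hxp]
      push_cast
      ring
    have : F x ≤ 0 := by
      refine ge_of_tendsto htend ?_
      filter_upwards [Filter.eventually_ge_atTop nst] with n hn
      exact bound n hn
    linarith
end

section
/- With the Taylor-substitution setup: let 0 < T < 1, let f ∈ ℝ[X, Y_1, …, Y_t], let trans_1, …, trans_t : ℝ → ℝ be regularly expandable on (0,T] with thresholds n_1, …, n_t, set n* = max(n_1, …, n_t), and let F(x) = f(x, trans_1(x), …, trans_t(x)). Suppose F(x) > 0 for all x ∈ (0,T). Then there exist n_0 ≥ n* and δ ∈ (0,T) such that Tmin(n_0,F)(x) > 0 for all x ∈ (0,δ). -/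
namespace Stmt19Aux
open Polynomial Finset Filter

lemma taylor_succ (a : ℕ → ℝ) (m : ℕ → ℕ) (N : ℕ) :
    taylorPoly a m (N+1) = taylorPoly a m N
      + Polynomial.C ((-1:ℝ)^N * a (N+1)) * Polynomial.X ^ (m (N+1)) := by
  simp [taylorPoly, Finset.sum_range_succ]

lemma eval_taylor_succ (a : ℕ → ℝ) (m : ℕ → ℕ) (N : ℕ) (x : ℝ) :
    (taylorPoly a m (N+1)).eval x
      = (taylorPoly a m N).eval x + (-1:ℝ)^N * a (N+1) * x ^ (m (N+1)) := by
  simp [taylor_succ, mul_assoc]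

lemma le_m_succ (m : ℕ → ℕ) (hm : ∀ i, 1 ≤ i → m i < m (i+1)) : ∀ i, i ≤ m (i+1) := by
  intro i
  induction i with
  | zero => exact Nat.zero_le _
  | succ i ih => have := hm (i+1) (by omega); omega

lemma mv_eval_mono {σ : Type*} (p : MvPolynomial σ ℝ) (hp : ∀ d, 0 ≤ p.coeff d)
    {y y' : σ → ℝ} (h0 : ∀ i, 0 ≤ y i) (h : ∀ i, y i ≤ y' i) :
    MvPolynomial.eval y p ≤ MvPolynomial.eval y' p := by
  rw [MvPolynomial.eval_eq, MvPolynomial.eval_eq]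
  apply Finset.sum_le_sum
  intro d _
  apply mul_le_mul_of_nonneg_left _ (hp d)
  apply Finset.prod_le_prod
  · intro i _; exact pow_nonneg (h0 i) _
  · intro i _; exact pow_le_pow_left₀ (h0 i) (h i) _

lemma eval_aeval {σ : Type*} (g : σ → Polynomial ℝ) (p : MvPolynomial σ ℝ) (x : ℝ) :
    (MvPolynomial.aeval g p).eval x = MvPolynomial.eval (fun i => (g i).eval x) p := by
  induction p using MvPolynomial.induction_on with
  | C c => simp
  | add p q hp hq => simp [map_add, hp, hq]
  | mul_X p i hp => simp [map_mul, hp]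

lemma aeval_sub_dvd {σ : Type*} (p : MvPolynomial σ ℝ) (g g' : σ → Polynomial ℝ)
    (w : Polynomial ℝ) (h : ∀ i, w ∣ g i - g' i) :
    w ∣ MvPolynomial.aeval g p - MvPolynomial.aeval g' p := by
  induction p using MvPolynomial.induction_on with
  | C c => simp
  | add p q hp hq =>
      have := dvd_add hp hq
      simpa [map_add, add_sub_add_comm] using this
  | mul_X p i hp =>
      have key : MvPolynomial.aeval g (p * MvPolynomial.X i)
          - MvPolynomial.aeval g' (p * MvPolynomial.X i)
          = (MvPolynomial.aeval g p - MvPolynomial.aeval g' p) * g i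
            + MvPolynomial.aeval g' p * (g i - g' i) := by
        simp [map_mul]; ring
      rw [key]
      exact dvd_add (hp.mul_right _) ((h i).mul_left _)

noncomputable def pnorm (P : Polynomial ℝ) : ℝ := ∑ j ∈ P.support, |P.coeff j|

lemma pnorm_nonneg (P : Polynomial ℝ) : 0 ≤ pnorm P :=
  Finset.sum_nonneg fun _ _ => abs_nonneg _

lemma pnorm_eq_sum {P : Polynomial ℝ} {S : Finset ℕ} (hS : P.support ⊆ S) :
    pnorm P = ∑ j ∈ S, |P.coeff j| := by
  refine Finset.sum_subset hS fun j _ hj => ?_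
  simp [Polynomial.notMem_support_iff.mp hj]

lemma pnorm_range {P : Polynomial ℝ} {K : ℕ} (h : P.natDegree < K) :
    pnorm P = ∑ j ∈ Finset.range K, |P.coeff j| :=
  pnorm_eq_sum (fun j hj => Finset.mem_range.mpr
    (lt_of_le_of_lt (Polynomial.le_natDegree_of_mem_supp j hj) h))

lemma pnorm_add_le (P Q : Polynomial ℝ) : pnorm (P + Q) ≤ pnorm P + pnorm Q := by
  set K := max (P+Q).natDegree (max P.natDegree Q.natDegree) + 1 with hK
  rw [pnorm_range (P := P+Q) (K := K) (by omega),
      pnorm_range (P := P) (K := K) (by omega),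
      pnorm_range (P := Q) (K := K) (by omega), ← Finset.sum_add_distrib]
  exact Finset.sum_le_sum fun j _ => by simpa using abs_add_le (P.coeff j) (Q.coeff j)

lemma pnorm_sum_le {ι : Type*} (s : Finset ι) (f : ι → Polynomial ℝ) :
    pnorm (∑ i ∈ s, f i) ≤ ∑ i ∈ s, pnorm (f i) := by
  induction s using Finset.cons_induction with
  | empty => simp [pnorm]
  | cons i s hi ih =>
      rw [Finset.sum_cons, Finset.sum_cons]
      exact (pnorm_add_le _ _).trans (by linarith)

lemma pnorm_mul_le (P Q : Polynomial ℝ) : pnorm (P * Q) ≤ pnorm P * pnorm Q := by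
  set K := P.natDegree + Q.natDegree + 1 with hK
  have h1 : pnorm (P * Q) ≤ ∑ k ∈ Finset.range K, ∑ x ∈ Finset.HasAntidiagonal.antidiagonal k,
      |P.coeff x.1| * |Q.coeff x.2| := by
    rw [pnorm_eq_sum (P := P * Q) (S := Finset.range K)
      (fun j hj => Finset.mem_range.mpr (lt_of_le_of_lt
        (Polynomial.le_natDegree_of_mem_supp j hj)
        (lt_of_le_of_lt (Polynomial.natDegree_mul_le) (by omega))))]
    refine Finset.sum_le_sum fun k _ => ?_
    rw [Polynomial.coeff_mul]
    exact (Finset.abs_sum_le_sum_abs _ _).trans (le_of_eq (by simp [abs_mul]))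
  have h2 : ∑ k ∈ Finset.range K, ∑ x ∈ Finset.HasAntidiagonal.antidiagonal k,
      |P.coeff x.1| * |Q.coeff x.2|
      ≤ ∑ x ∈ Finset.range K ×ˢ Finset.range K, |P.coeff x.1| * |Q.coeff x.2| := by
    rw [← Finset.sum_biUnion]
    · refine Finset.sum_le_sum_of_subset_of_nonneg ?_ (fun x _ _ => by positivity)
      intro x hx
      simp only [Finset.mem_biUnion, Finset.mem_range, Finset.HasAntidiagonal.mem_antidiagonal] at hx
      obtain ⟨k, hk, hxk⟩ := hx
      simp only [Finset.mem_product, Finset.mem_range]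
      omega
    · intro i hi j hj hij
      refine Finset.disjoint_left.mpr fun x hxi hxj => hij ?_
      rw [Finset.HasAntidiagonal.mem_antidiagonal] at hxi hxj
      omega
  have h3 : ∑ x ∈ Finset.range K ×ˢ Finset.range K, |P.coeff x.1| * |Q.coeff x.2|
      = pnorm P * pnorm Q := by
    rw [Finset.sum_product, pnorm_range (P := P) (K := K) (by omega),
        pnorm_range (P := Q) (K := K) (by omega), Finset.sum_mul]
    exact Finset.sum_congr rfl fun i _ => by rw [Finset.mul_sum]
  linarith

lemma pnorm_C (c : ℝ) : pnorm (Polynomial.C c) = |c| := by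
  by_cases hc : c = 0 <;> simp [pnorm, hc, Polynomial.support_C, hc]

lemma pnorm_one : pnorm 1 = 1 := by simpa using pnorm_C 1

lemma pnorm_X : pnorm (Polynomial.X : Polynomial ℝ) = 1 := by
  simp [pnorm, Polynomial.support_X]

lemma pnorm_pow_le (P : Polynomial ℝ) (k : ℕ) : pnorm (P ^ k) ≤ pnorm P ^ k := by
  induction k with
  | zero => simp [pnorm_one]
  | succ k ih =>
      rw [pow_succ, pow_succ]
      exact (pnorm_mul_le _ _).trans
        (mul_le_mul_of_nonneg_right ih (pnorm_nonneg _) |>.trans le_rfl)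

lemma pnorm_prod_le {ι : Type*} (s : Finset ι) (f : ι → Polynomial ℝ) :
    pnorm (∏ i ∈ s, f i) ≤ ∏ i ∈ s, pnorm (f i) := by
  induction s using Finset.cons_induction with
  | empty => simp [pnorm_one]
  | cons i s hi ih =>
      rw [Finset.prod_cons, Finset.prod_cons]
      refine (pnorm_mul_le _ _).trans ?_
      exact mul_le_mul_of_nonneg_left ih (pnorm_nonneg _)

lemma pnorm_monomial (c : ℝ) (k : ℕ) : pnorm (Polynomial.C c * Polynomial.X ^ k) ≤ |c| := by
  refine (pnorm_mul_le _ _).trans ?_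
  rw [pnorm_C]
  have : pnorm ((Polynomial.X : Polynomial ℝ) ^ k) ≤ 1 := by
    refine (pnorm_pow_le _ k).trans ?_
    rw [pnorm_X]; simp
  nlinarith [abs_nonneg c, pnorm_nonneg ((Polynomial.X : Polynomial ℝ) ^ k)]

lemma abs_eval_le (P : Polynomial ℝ) (x : ℝ) (M : ℕ) (hx0 : 0 ≤ x) (hx1 : x ≤ 1)
    (hP : ∀ j < M, P.coeff j = 0) : |P.eval x| ≤ pnorm P * x ^ M := by
  rw [Polynomial.eval_eq_sum, Polynomial.sum_def]
  refine (Finset.abs_sum_le_sum_abs _ _).trans ?_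
  rw [pnorm, Finset.sum_mul]
  refine Finset.sum_le_sum fun j hj => ?_
  rw [abs_mul, abs_pow, abs_of_nonneg hx0]
  refine mul_le_mul_of_nonneg_left ?_ (abs_nonneg _)
  have hjM : M ≤ j := by
    by_contra hc
    exact Polynomial.mem_support_iff.mp hj (hP j (by omega))
  exact pow_le_pow_of_le_one hx0 hx1 hjM

lemma pnorm_aeval_le {σ : Type*} (p : MvPolynomial σ ℝ) (g : σ → Polynomial ℝ)
    (B : ℝ) (hB : 1 ≤ B) (hg : ∀ i, pnorm (g i) ≤ B) :
    pnorm (MvPolynomial.aeval g p)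
      ≤ (∑ d ∈ p.support, |MvPolynomial.coeff d p|) * B ^ p.totalDegree := by
  rw [MvPolynomial.aeval_def, MvPolynomial.eval₂_eq, Finset.sum_mul]
  refine (pnorm_sum_le _ _).trans (Finset.sum_le_sum fun d hd => ?_)
  have hB0 : (0:ℝ) ≤ B := le_trans zero_le_one hB
  have h1 : pnorm ((algebraMap ℝ (Polynomial ℝ)) (MvPolynomial.coeff d p)
        * ∏ i ∈ d.support, g i ^ d i)
      ≤ |MvPolynomial.coeff d p| * ∏ i ∈ d.support, pnorm (g i) ^ d i := by
    refine (pnorm_mul_le _ _).trans ?_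
    have : pnorm ((algebraMap ℝ (Polynomial ℝ)) (MvPolynomial.coeff d p))
        = |MvPolynomial.coeff d p| := pnorm_C _
    rw [this]
    refine mul_le_mul_of_nonneg_left ?_ (abs_nonneg _)
    refine (pnorm_prod_le _ _).trans (Finset.prod_le_prod
      (fun i _ => pnorm_nonneg _) (fun i _ => pnorm_pow_le _ _))
  refine h1.trans (mul_le_mul_of_nonneg_left ?_ (abs_nonneg _))
  have h2 : ∏ i ∈ d.support, pnorm (g i) ^ d i ≤ ∏ i ∈ d.support, B ^ d i :=
    Finset.prod_le_prod (fun i _ => pow_nonneg (pnorm_nonneg _) _)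
      (fun i _ => pow_le_pow_left₀ (pnorm_nonneg _) (hg i) _)
  refine h2.trans ?_
  rw [Finset.prod_pow_eq_pow_sum]
  exact pow_le_pow_right₀ hB (MvPolynomial.le_totalDegree hd)

lemma pnorm_taylor_le (a : ℕ → ℝ) (m : ℕ → ℕ) (N : ℕ)
    (ha : ∀ i, 1 ≤ i → |a i| ≤ 1) : pnorm (taylorPoly a m N) ≤ N := by
  rw [taylorPoly]
  refine (pnorm_sum_le _ _).trans ?_
  have hb : ∀ i ∈ Finset.range N, pnorm (Polynomial.C ((-1:ℝ)^i * a (i+1))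
      * Polynomial.X ^ (m (i+1))) ≤ 1 := by
    intro i _
    refine (pnorm_monomial _ _).trans ?_
    rw [abs_mul, abs_pow, abs_neg, abs_one, one_pow, one_mul]
    exact ha (i+1) (by omega)
  calc ∑ i ∈ Finset.range N, pnorm (Polynomial.C ((-1:ℝ)^i * a (i+1))
        * Polynomial.X ^ (m (i+1))) ≤ ∑ _i ∈ Finset.range N, (1:ℝ) :=
        Finset.sum_le_sum hb
    _ = N := by simp

lemma alt_bounds {g : ℝ → ℝ} {T : ℝ} {n0 : ℕ} (E : RegExpand g T n0)
    (n : ℕ) (hn : n0 ≤ n) (hn1 : 1 ≤ n) (x : ℝ) (hx : x ∈ Set.Ioc (0:ℝ) T) :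
    (taylorPoly E.a E.m (2*n)).eval x ≤ g x ∧
      g x ≤ (taylorPoly E.a E.m (2*n-1)).eval x := by
  set Sx : ℕ → ℝ := fun N => (taylorPoly E.a E.m N).eval x with hSx
  have conv : Filter.Tendsto Sx Filter.atTop (nhds (g x)) :=
    E.converges x ⟨hx.1.le, hx.2⟩
  have step : ∀ N, n0 ≤ N → Sx (N+2)
      = Sx N + (-1:ℝ)^N * (E.a (N+1) * x ^ E.m (N+1) - E.a (N+2) * x ^ E.m (N+2)) := by
    intro N _
    have h1 := eval_taylor_succ E.a E.m N x
    have h2 := eval_taylor_succ E.a E.m (N+1) x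
    have h3 : ((-1:ℝ))^(N+1) = -(-1:ℝ)^N := by rw [pow_succ]; ring
    simp only [hSx]
    rw [show N + 2 = (N+1)+1 by omega, h2, h1, h3]
    ring
  have heven : ∀ N, n0 ≤ N → Even N → Sx N ≤ Sx (N+2) := by
    intro N hN he
    have hd := E.terms_dec (N+1) (by omega) x hx
    rw [step N hN, he.neg_one_pow]
    nlinarith [hd.1]
  have hodd : ∀ N, n0 ≤ N → Odd N → Sx (N+2) ≤ Sx N := by
    intro N hN ho
    have hd := E.terms_dec (N+1) (by omega) x hx
    rw [step N hN, ho.neg_one_pow]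
    nlinarith [hd.1]
  have tendsto_aux : ∀ b : ℕ, Filter.Tendsto (fun j => Sx (b + 2*j))
      Filter.atTop (nhds (g x)) := by
    intro b
    exact conv.comp (Filter.tendsto_atTop_atTop.mpr fun c => ⟨c, fun a ha => by omega⟩)
  constructor
  · have chain : ∀ j, Sx (2*n) ≤ Sx (2*n + 2*j) := by
      intro j
      induction j with
      | zero => simp
      | succ j ih =>
          refine ih.trans ?_
          rw [show 2*n + 2*(j+1) = (2*n+2*j) + 2 by omega]
          exact heven (2*n+2*j) (by omega) ⟨n+j, by omega⟩
    exact ge_of_tendsto' (tendsto_aux (2*n)) chain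
  · have chain : ∀ j, Sx (2*n - 1 + 2*j) ≤ Sx (2*n - 1) := by
      intro j
      induction j with
      | zero => simp
      | succ j ih =>
          refine le_trans ?_ ih
          rw [show 2*n - 1 + 2*(j+1) = (2*n - 1 + 2*j) + 2 by omega]
          exact hodd (2*n-1+2*j) (by omega) ⟨n-1+j, by omega⟩
    exact le_of_tendsto' (tendsto_aux (2*n-1)) chain

lemma pos_near_zero (P : Polynomial ℝ) (d : ℕ) (h0 : ∀ j < d, P.coeff j = 0)
    (hd : 0 < P.coeff d) : ∃ δ > 0, ∀ x ∈ Set.Ioo (0:ℝ) δ, 0 < P.eval x := by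
  obtain ⟨Q, hQ⟩ := Polynomial.X_pow_dvd_iff.mpr h0
  have hQ0 : 0 < Q.coeff 0 := by
    have h := congrArg (fun p : Polynomial ℝ => p.coeff d) hQ
    have h2 : ((Polynomial.X:Polynomial ℝ)^d * Q).coeff (0 + d) = Q.coeff 0 :=
      Polynomial.coeff_X_pow_mul Q d 0
    rw [zero_add] at h2
    rw [h, h2] at hd
    exact hd
  have hQ0' : 0 < Q.eval 0 := by rwa [← Polynomial.coeff_zero_eq_eval_zero]
  have hopen : IsOpen {x : ℝ | 0 < Q.eval x} :=
    isOpen_lt continuous_const (Polynomial.continuous_aeval (R := ℝ) (p := Q))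
  obtain ⟨ε, hε, hball⟩ := Metric.isOpen_iff.mp hopen 0 hQ0'
  refine ⟨ε, hε, fun x hx => ?_⟩
  have hxQ : 0 < Q.eval x := by
    apply hball
    rw [Metric.mem_ball, Real.dist_eq, sub_zero, abs_of_pos hx.1]
    exact hx.2
  rw [hQ, Polynomial.eval_mul, Polynomial.eval_pow, Polynomial.eval_X]
  exact mul_pos (pow_pos hx.1 d) hxQ

end Stmt19Aux

open Stmt19Aux Polynomial Filter in
/-- with the Taylor-substitution setup and `0 < T < 1`, if `F > 0` on
`(0,T)`, then there are `n₀ ≥ n* = max(n₁,…,n_t)` and `δ ∈ (0,T)` such that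
`Tmin(n₀,F)(x) > 0` for all `x ∈ (0,δ)`. -/
theorem stmt_19 (T : ℝ) (hT : 0 < T) (hT1 : T < 1) (t : ℕ)
    (f fplus fminus : MvPolynomial (Option (Fin t)) ℝ)
    (hplus : ∀ mo : Option (Fin t) →₀ ℕ,
      MvPolynomial.coeff mo fplus =
        if 0 < MvPolynomial.coeff mo f then MvPolynomial.coeff mo f else 0)
    (hminus : ∀ mo : Option (Fin t) →₀ ℕ,
      MvPolynomial.coeff mo fminus =
        if MvPolynomial.coeff mo f < 0 then MvPolynomial.coeff mo f else 0)
    (trans : Fin t → ℝ → ℝ) (nth : Fin t → ℕ)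
    (E : ∀ k, RegExpand (trans k) T (nth k))
    (F : ℝ → ℝ)
    (hF : ∀ x : ℝ, F x =
      MvPolynomial.eval (fun o => Option.elim o x (fun k => trans k x)) f)
    (hFpos : ∀ x ∈ Set.Ioo (0 : ℝ) T, 0 < F x) :
    ∃ n0, Finset.univ.sup nth ≤ n0 ∧
      ∃ δ : ℝ, 0 < δ ∧ δ < T ∧ ∀ x ∈ Set.Ioo (0 : ℝ) δ,
        0 < (Tmin fplus fminus (fun k => (E k).a) (fun k => (E k).m) n0).eval x := by
  classical
  set N1 := max (Finset.univ.sup nth) 1 with hN1def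
  have hN1 : (1:ℕ) ≤ N1 := le_max_right _ _
  have hnthle : ∀ k, nth k ≤ N1 :=
    fun k => le_trans (Finset.le_sup (Finset.mem_univ k)) (le_max_left _ _)
  set TMX : ℕ → Polynomial ℝ :=
    fun n => Tmax fplus fminus (fun k => (E k).a) (fun k => (E k).m) n with hTMX
  set TMN : ℕ → Polynomial ℝ :=
    fun n => Tmin fplus fminus (fun k => (E k).a) (fun k => (E k).m) n with hTMN
  have habs : ∀ k : Fin t, ∀ i, 1 ≤ i → |(E k).a i| ≤ 1 := fun k i hi => by
    rw [abs_of_pos ((E k).a_pos i hi)]; exact (E k).a_le_one i hi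
  have hcp : ∀ d, 0 ≤ MvPolynomial.coeff d fplus := fun d => by
    rw [hplus]; split_ifs with h; exacts [le_of_lt h, le_rfl]
  have hcm : ∀ d, 0 ≤ MvPolynomial.coeff d (-fminus) := fun d => by
    rw [MvPolynomial.coeff_neg, hminus]; split_ifs with h
    · linarith
    · simp
  have hsum : fplus + fminus = f := by
    apply MvPolynomial.ext; intro d
    rw [MvPolynomial.coeff_add, hplus, hminus]
    split_ifs with h1 h2 <;> linarith
  -- the key pointwise inequality : F ≤ Tmax n on (0,T]
  have hFle : ∀ n, N1 ≤ n → ∀ x ∈ Set.Ioc (0:ℝ) T, F x ≤ (TMX n).eval x := by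
    intro n hn x hx
    have hn1 : 1 ≤ n := le_trans hN1 hn
    have hb : ∀ k : Fin t,
        (taylorPoly (E k).a (E k).m (2*n)).eval x ≤ trans k x ∧
          trans k x ≤ (taylorPoly (E k).a (E k).m (2*n-1)).eval x :=
      fun k => alt_bounds (E k) n (le_trans (hnthle k) hn) hn1 x hx
    rw [hF x, ← hsum, map_add]
    have hTx : (TMX n).eval x =
        MvPolynomial.eval (fun i =>
          ((fun o => Option.elim o Polynomial.X
            (fun k => taylorPoly ((E k).a) ((E k).m) (2 * n - 1))) i).eval x) fplus
        + MvPolynomial.eval (fun i =>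
          ((fun o => Option.elim o Polynomial.X
            (fun k => taylorPoly ((E k).a) ((E k).m) (2 * n))) i).eval x) fminus := by
      simp only [hTMX, Tmax, Polynomial.eval_add, eval_aeval]
    rw [hTx]
    have h1 : MvPolynomial.eval (fun o => Option.elim o x (fun k => trans k x)) fplus
        ≤ MvPolynomial.eval (fun i =>
          ((fun o => Option.elim o Polynomial.X
            (fun k => taylorPoly ((E k).a) ((E k).m) (2 * n - 1))) i).eval x) fplus := by
      apply mv_eval_mono fplus hcp
      · intro i
        cases i with
        | none => exact le_of_lt hx.1
        | some k => exact le_of_lt ((E k).g_pos x hx)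
      · intro i
        cases i with
        | none => simp
        | some k => simpa using (hb k).2
    have h2 : MvPolynomial.eval (fun o => Option.elim o x (fun k => trans k x)) fminus
        ≤ MvPolynomial.eval (fun i =>
          ((fun o => Option.elim o Polynomial.X
            (fun k => taylorPoly ((E k).a) ((E k).m) (2 * n))) i).eval x) fminus := by
      have h3 : MvPolynomial.eval (fun i =>
          ((fun o => Option.elim o Polynomial.X
            (fun k => taylorPoly ((E k).a) ((E k).m) (2 * n))) i).eval x) (-fminus)
          ≤ MvPolynomial.eval (fun o => Option.elim o x (fun k => trans k x)) (-fminus) := by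
        apply mv_eval_mono (-fminus) hcm
        · intro i
          cases i with
          | none => simpa using le_of_lt hx.1
          | some k =>
              simpa using le_of_lt ((E k).taylor_pos (2*n)
                (le_trans (le_trans (hnthle k) hn) (by omega)) x hx)
        · intro i
          cases i with
          | none => simp
          | some k => simpa using (hb k).1
      simp only [map_neg] at h3
      linarith
    exact add_le_add h1 h2
  -- divisibility : X^(2n-1) ∣ Tmax n - Tmin n
  have hdvd : ∀ n, 1 ≤ n →
      (Polynomial.X : Polynomial ℝ)^(2*n-1) ∣ TMX n - TMN n := by
    intro n hn
    have hk : ∀ k : Fin t, (Polynomial.X : Polynomial ℝ)^(2*n-1) ∣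
        taylorPoly (E k).a (E k).m (2*n-1) - taylorPoly (E k).a (E k).m (2*n) := by
      intro k
      have h := taylor_succ (E k).a (E k).m (2*n-1)
      rw [show 2*n-1+1 = 2*n by omega] at h
      rw [h, sub_add_cancel_left]
      have hle : 2*n-1 ≤ (E k).m (2*n) := by
        have h2 := le_m_succ (E k).m (E k).m_mono (2*n-1)
        rwa [show 2*n-1+1 = 2*n by omega] at h2
      exact dvd_neg.mpr (Dvd.dvd.mul_left (pow_dvd_pow _ hle) _)
    have hplusdvd := aeval_sub_dvd fplus
      (fun o => Option.elim o Polynomial.X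
        (fun k => taylorPoly ((E k).a) ((E k).m) (2 * n - 1)))
      (fun o => Option.elim o Polynomial.X
        (fun k => taylorPoly ((E k).a) ((E k).m) (2 * n)))
      ((Polynomial.X : Polynomial ℝ)^(2*n-1))
      (fun i => by cases i with
        | none => simp
        | some k => simpa using hk k)
    have hminusdvd := aeval_sub_dvd fminus
      (fun o => Option.elim o Polynomial.X
        (fun k => taylorPoly ((E k).a) ((E k).m) (2 * n)))
      (fun o => Option.elim o Polynomial.X
        (fun k => taylorPoly ((E k).a) ((E k).m) (2 * n - 1)))
      ((Polynomial.X : Polynomial ℝ)^(2*n-1))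
      (fun i => by cases i with
        | none => simp
        | some k => simpa using (dvd_sub_comm.mp (hk k)))
    have hcomb := dvd_add hplusdvd hminusdvd
    simp only [hTMX, hTMN, Tmax, Tmin]
    rw [add_sub_add_comm]
    exact hcomb
  by_cases hS : ∃ j, ∃ n, N1 ≤ n ∧ j < 2*n - 1 ∧ (TMX n).coeff j ≠ 0
  · -- Case A
    set d := Nat.find hS with hd
    obtain ⟨n1, hn1N, hdlt, hcne⟩ := Nat.find_spec hS
    have hn11 : 1 ≤ n1 := le_trans hN1 hn1N
    have hbelow : ∀ j < d, (TMX n1).coeff j = 0 := by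
      intro j hj
      by_contra hc
      exact Nat.find_min hS hj ⟨n1, hn1N, by omega, hc⟩
    have hcpos : 0 < (TMX n1).coeff d := by
      rcases lt_trichotomy ((TMX n1).coeff d) 0 with hlt | heq | hgt
      · exfalso
        obtain ⟨δ, hδ, hpos⟩ := pos_near_zero (-(TMX n1)) d
          (fun j hj => by rw [Polynomial.coeff_neg, hbelow j hj, neg_zero])
          (by rw [Polynomial.coeff_neg]; linarith)
        set x := min δ T / 2 with hxdef
        have hx0 : 0 < x := by positivity
        have hxδ : x < δ := by
          have : min δ T ≤ δ := min_le_left _ _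
          rw [hxdef]; linarith
        have hxT : x < T := by
          have : min δ T ≤ T := min_le_right _ _
          rw [hxdef]; linarith
        have h1 := hpos x ⟨hx0, hxδ⟩
        rw [Polynomial.eval_neg] at h1
        have h2 := hFle n1 hn1N x ⟨hx0, le_of_lt hxT⟩
        have h3 := hFpos x ⟨hx0, hxT⟩
        linarith
      · exact absurd heq hcne
      · exact hgt
    -- transfer low coefficients to Tmin
    have hcoefeq : ∀ j < 2*n1 - 1, (TMN n1).coeff j = (TMX n1).coeff j := by
      intro j hj
      have h := Polynomial.X_pow_dvd_iff.mp (hdvd n1 hn11) j hj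
      rw [Polynomial.coeff_sub] at h
      linarith
    obtain ⟨δ, hδ, hpos⟩ := pos_near_zero (TMN n1) d
      (fun j hj => by rw [hcoefeq j (by omega), hbelow j hj])
      (by rw [hcoefeq d hdlt]; exact hcpos)
    refine ⟨n1, le_trans (le_max_left _ _) hn1N, min δ (T/2), by positivity, ?_, ?_⟩
    · have : min δ (T/2) ≤ T/2 := min_le_right _ _
      linarith
    · intro x hx
      have : x ∈ Set.Ioo (0:ℝ) δ :=
        ⟨hx.1, lt_of_lt_of_le hx.2 (min_le_left _ _)⟩
      exact hpos x this
  · -- Case B : impossible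
    exfalso
    push_neg at hS
    set x0 := T / 2 with hx0def
    have hx0l : 0 < x0 := by positivity
    have hx0T : x0 < T := by linarith
    have hx01 : x0 < 1 := by linarith
    have hF0 := hFpos x0 ⟨hx0l, hx0T⟩
    set s := max fplus.totalDegree fminus.totalDegree with hs
    set Kp := ∑ d ∈ fplus.support, |MvPolynomial.coeff d fplus| with hKp
    set Km := ∑ d ∈ fminus.support, |MvPolynomial.coeff d fminus| with hKm
    have hKp0 : 0 ≤ Kp := Finset.sum_nonneg fun _ _ => abs_nonneg _
    have hKm0 : 0 ≤ Km := Finset.sum_nonneg fun _ _ => abs_nonneg _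
    set K := Kp + Km with hK
    -- uniform bound on pnorm (TMX n)
    have hbound : ∀ n, 1 ≤ n → pnorm (TMX n) ≤ K * ((2*n : ℕ) : ℝ)^s := by
      intro n hn
      set B := ((2*n : ℕ) : ℝ) with hB
      have hB1 : (1:ℝ) ≤ B := by
        rw [hB]; exact_mod_cast Nat.one_le_iff_ne_zero.mpr (by omega)
      have hgodd : ∀ i : Option (Fin t), pnorm
          ((fun o => Option.elim o Polynomial.X
            (fun k => taylorPoly ((E k).a) ((E k).m) (2 * n - 1))) i) ≤ B := by
        intro i
        cases i with
        | none => simpa [pnorm_X] using hB1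
        | some k =>
            refine le_trans ?_ (show (((2*n-1 : ℕ)) : ℝ) ≤ B from by
              rw [hB]; exact_mod_cast (by omega : 2*n-1 ≤ 2*n))
            simpa using pnorm_taylor_le ((E k).a) ((E k).m) (2*n-1) (habs k)
      have hgeven : ∀ i : Option (Fin t), pnorm
          ((fun o => Option.elim o Polynomial.X
            (fun k => taylorPoly ((E k).a) ((E k).m) (2 * n))) i) ≤ B := by
        intro i
        cases i with
        | none => simpa [pnorm_X] using hB1
        | some k =>
            rw [hB]
            exact pnorm_taylor_le ((E k).a) ((E k).m) (2*n) (habs k)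
      have h1 := pnorm_aeval_le fplus _ B hB1 hgodd
      have h2 := pnorm_aeval_le fminus _ B hB1 hgeven
      have hB0 : (0:ℝ) ≤ B := le_trans zero_le_one hB1
      have h1' : pnorm (MvPolynomial.aeval
          (fun o => Option.elim o Polynomial.X
            (fun k => taylorPoly ((E k).a) ((E k).m) (2 * n - 1))) fplus)
          ≤ Kp * B^s := by
        refine h1.trans (mul_le_mul_of_nonneg_left ?_ hKp0)
        exact pow_le_pow_right₀ hB1 (le_max_left _ _)
      have h2' : pnorm (MvPolynomial.aeval
          (fun o => Option.elim o Polynomial.X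
            (fun k => taylorPoly ((E k).a) ((E k).m) (2 * n))) fminus)
          ≤ Km * B^s := by
        refine h2.trans (mul_le_mul_of_nonneg_left ?_ hKm0)
        exact pow_le_pow_right₀ hB1 (le_max_right _ _)
      have h3 : pnorm (TMX n) ≤ Kp * B^s + Km * B^s := by
        simp only [hTMX, Tmax]
        exact (pnorm_add_le _ _).trans (add_le_add h1' h2')
      rw [hK]; ring_nf; ring_nf at h3; linarith
    -- the value bound
    have hval : ∀ n, N1 ≤ n → F x0 ≤ K * ((2*n : ℕ) : ℝ)^s * x0^(2*n-1) := by
      intro n hn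
      have hn1 : 1 ≤ n := le_trans hN1 hn
      have h1 := hFle n hn x0 ⟨hx0l, le_of_lt hx0T⟩
      have h2 := abs_eval_le (TMX n) x0 (2*n-1) (le_of_lt hx0l) (le_of_lt hx01)
        (fun j hj => hS j n hn hj)
      have h3 : pnorm (TMX n) * x0^(2*n-1) ≤ K * ((2*n : ℕ) : ℝ)^s * x0^(2*n-1) :=
        mul_le_mul_of_nonneg_right (hbound n hn1) (by positivity)
      calc F x0 ≤ (TMX n).eval x0 := h1
        _ ≤ |(TMX n).eval x0| := le_abs_self _
        _ ≤ pnorm (TMX n) * x0^(2*n-1) := h2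
        _ ≤ K * ((2*n : ℕ) : ℝ)^s * x0^(2*n-1) := h3
    -- the bound tends to 0
    have hrearr : ∀ n : ℕ, 1 ≤ n → K * ((2*n : ℕ) : ℝ)^s * x0^(2*n-1)
        = (K * 2^s / x0) * ((n:ℝ)^s * (x0^2)^n) := by
      intro n hn
      have hx0ne : x0 ≠ 0 := ne_of_gt hx0l
      have hcast : ((2*n : ℕ) : ℝ) = 2 * (n:ℝ) := by push_cast; ring
      have hpow : x0^(2*n-1) * x0 = x0^(2*n) := by
        rw [← pow_succ]; congr 1; omega
      have hpow2 : (x0^2)^n = x0^(2*n) := by rw [← pow_mul]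
      rw [hcast]
      field_simp
      rw [mul_pow, hpow2, ← hpow]
      ring
    have ht : Filter.Tendsto (fun n : ℕ => (K * 2^s / x0) * ((n:ℝ)^s * (x0^2)^n))
        Filter.atTop (nhds 0) := by
      have h0 := tendsto_pow_const_mul_const_pow_of_abs_lt_one s
        (r := x0^2) (by rw [abs_of_pos (by positivity)]; nlinarith)
      simpa using h0.const_mul (K * 2^s / x0)
    have hev := (ht.eventually (gt_mem_nhds hF0)).and (Filter.eventually_ge_atTop N1)
    obtain ⟨n, hlt, hn⟩ := hev.exists
    have h1 := hval n hn
    rw [hrearr n (le_trans hN1 hn)] at h1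
    linarith
end
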